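/- arXiv:2409.03237 — 3 statements merged into one kernel-verified Lean document; each statement's English description precedes it below -/
import Mathlib

section
/- For the five-state example MDP under the Huber attack with attack signal C = ((2−ε)d + κ)/ε, any fixed point Q* of the clean Bellman operator T* and any fixed point Q̃*_c of the perturbed Bellman operator T̃*_c satisfy ‖Q̃*_c − Q*‖∞ = 2d + κ; in particular, since κ > 0 can be chosen arbitrarily large by the attacker, the gap ‖Q̃*_c − Q*‖∞ can be made arbitrarily large. -/
open Finset

/-- The two actions `L` and `R`. -/
inductive Act : Type
  | L : Act
  | R : Act
  deriving DecidableEq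

instance : Fintype Act := ⟨{Act.L, Act.R}, fun x => by cases x <;> simp⟩

instance : Nonempty Act := ⟨Act.L⟩

/-- Transition kernel of the five-state example MDP; state `i+1` of the paper
is encoded as `(i : Fin 5)`.  From state 1, action `L` leads to state 2 w.p. `p`
and to state 5 w.p. `1-p`; action `R` leads to state 3 w.p. `p` and to
state 4 w.p. `1-p`.  State 2 stays w.p. `p` and moves to state 5 w.p. `1-p`;
state 3 stays w.p. `p` and moves to state 4 w.p. `1-p`; states 4 and 5 are
absorbing. -/
def P5 (p : ℝ) : Fin 5 → Act → Fin 5 → ℝ := fun s a s' =>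
  if s = 0 then
    (match a with
      | Act.L => if s' = 1 then p else if s' = 4 then 1 - p else 0
      | Act.R => if s' = 2 then p else if s' = 3 then 1 - p else 0)
  else if s = 1 then (if s' = 1 then p else if s' = 4 then 1 - p else 0)
  else if s = 2 then (if s' = 2 then p else if s' = 3 then 1 - p else 0)
  else if s = 3 then (if s' = 3 then 1 else 0)
  else (if s' = 4 then 1 else 0)

/-- Clean expected rewards of the five-state example MDP: `R(1,L)=d`,
`R(1,R)=-d`, reward `1` in states 2 and 3, reward `0` in states 4 and 5. -/
def R5 (d : ℝ) : Fin 5 → Act → ℝ := fun s a =>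
  if s = 0 then (match a with | Act.L => d | Act.R => -d)
  else if s = 1 ∨ s = 2 then 1
  else 0

/-- Bellman optimality operator
`(T*Q)(s,a) = R(s,a) + γ Σ_{s'} P(s'|s,a) max_{a'} Q(s',a')`. -/
noncomputable def bellman (P : Fin 5 → Act → Fin 5 → ℝ) (R : Fin 5 → Act → ℝ) (γ : ℝ)
    (Q : Fin 5 → Act → ℝ) : Fin 5 → Act → ℝ :=
  fun s a =>
    R s a + γ * ∑ s', P s a s' * Finset.univ.sup' Finset.univ_nonempty (fun a' => Q s' a')

/-- Perturbed expected rewards under the Huber attack with corruption fraction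
`ε` and attack signal `C`: `R̃(1,L) = (1-ε)d - εC`, `R̃(1,R) = -(1-ε)d + εC`,
and `R̃(s,a) = R(s,a)` for `s ≠ 1`. -/
def R5c (d ε C : ℝ) : Fin 5 → Act → ℝ := fun s a =>
  if s = 0 then (match a with
    | Act.L => (1 - ε) * d - ε * C
    | Act.R => -((1 - ε) * d) + ε * C)
  else R5 d s a

/-- Sup norm `‖Q‖∞ = max_{(s,a)} |Q(s,a)|`. -/
noncomputable def supNorm (Q : Fin 5 → Act → ℝ) : ℝ :=
  Finset.univ.sup' Finset.univ_nonempty (fun q : Fin 5 × Act => |Q q.1 q.2|)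

/-
Idea: no transition ever enters state `0` (the paper's state 1), and the attack only changes the
rewards there. The gap between the two fixed points on the remaining states is bounded by `γ`
times itself, hence vanishes, so `Q̃*_c - Q*` equals `R̃ - R`: zero away from state `0` and
`∓ε (d + C) = ∓(2d + κ)` at it.
-/

theorem abs_sup'_sub_sup'_le {ι α : Type*} [AddCommGroup α] [LinearOrder α]
    [IsOrderedAddMonoid α] {s : Finset ι} (hs : s.Nonempty) {f g : ι → α} {c : α}
    (h : ∀ i ∈ s, |f i - g i| ≤ c) : |s.sup' hs f - s.sup' hs g| ≤ c := by
  have key : ∀ f g : ι → α, (∀ i ∈ s, |f i - g i| ≤ c) → s.sup' hs f ≤ c + s.sup' hs g :=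
    fun f g h => sup'_le _ _ fun i hi =>
      (sub_le_iff_le_add.1 ((le_abs_self _).trans (h i hi))).trans
        (add_le_add_right (le_sup' g hi) c)
  exact abs_sub_le_iff.2 ⟨sub_le_iff_le_add.2 (key f g h),
    sub_le_iff_le_add.2 (key g f fun i hi => abs_sub_comm (g i) (f i) ▸ h i hi)⟩

noncomputable def stateValue (Q : Fin 5 → Act → ℝ) (s : Fin 5) : ℝ :=
  univ.sup' univ_nonempty (Q s)

theorem supNorm_eq_abs_of_forall_abs_le {Q : Fin 5 → Act → ℝ} (s₀ : Fin 5) (a₀ : Act)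
    (h : ∀ s a, |Q s a| ≤ |Q s₀ a₀|) : supNorm Q = |Q s₀ a₀| :=
  le_antisymm (sup'_le _ _ fun q _ => h q.1 q.2)
    (le_sup' (fun q : Fin 5 × Act => |Q q.1 q.2|) (mem_univ (s₀, a₀)))

section FixedPoints

variable {P : Fin 5 → Act → Fin 5 → ℝ} {R R' Q Q' : Fin 5 → Act → ℝ} {γ : ℝ}

theorem sub_eq_of_bellman_fixed (hQ : bellman P R γ Q = Q) (hQ' : bellman P R' γ Q' = Q')
    (s : Fin 5) (a : Act) :
    Q' s a - Q s a =
      R' s a - R s a + γ * ∑ s', P s a s' * (stateValue Q' s' - stateValue Q s') := by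
  conv_lhs => rw [← hQ', ← hQ]
  simp only [bellman, stateValue, mul_sub, sum_sub_distrib]
  ring

theorem bellman_fixed_eq_on_closed (hγ₀ : 0 ≤ γ) (hγ₁ : γ < 1)
    (hP_nonneg : ∀ s a s', 0 ≤ P s a s') (hP_sum : ∀ s a, ∑ s', P s a s' ≤ 1)
    {S : Finset (Fin 5)} (hS : ∀ s ∈ S, ∀ a, ∀ s' ∉ S, P s a s' = 0)
    (hR : ∀ s ∈ S, ∀ a, R' s a = R s a)
    (hQ : bellman P R γ Q = Q) (hQ' : bellman P R' γ Q' = Q') :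
    ∀ s ∈ S, ∀ a, Q' s a = Q s a := by
  intro s hs a
  obtain ⟨⟨s₀, a₀⟩, hmem, hmax⟩ := exists_max_image (S ×ˢ univ)
    (fun q => |Q' q.1 q.2 - Q q.1 q.2|) ⟨(s, a), mem_product.2 ⟨hs, mem_univ a⟩⟩
  -- The largest gap on `S` is attained at `(s₀, a₀)` and is at most `γ` times itself.
  obtain ⟨M, hM_def⟩ : ∃ M, M = |Q' s₀ a₀ - Q s₀ a₀| := ⟨_, rfl⟩
  rw [← hM_def] at hmax
  have hM_nonneg : 0 ≤ M := hM_def ▸ abs_nonneg _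
  have hs₀ : s₀ ∈ S := (mem_product.1 hmem).1
  have hV : ∀ s', |P s₀ a₀ s' * (stateValue Q' s' - stateValue Q s')| ≤ P s₀ a₀ s' * M := by
    intro s'
    rw [abs_mul, abs_of_nonneg (hP_nonneg _ _ _)]
    by_cases hs' : s' ∈ S
    · exact mul_le_mul_of_nonneg_left (abs_sup'_sub_sup'_le _ fun a' _ =>
        hmax (s', a') (mem_product.2 ⟨hs', mem_univ a'⟩)) (hP_nonneg _ _ _)
    · simp [hS s₀ hs₀ a₀ s' hs']
  have hM : M ≤ γ * M :=
    calc M = |γ * ∑ s', P s₀ a₀ s' * (stateValue Q' s' - stateValue Q s')| := by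
          rw [hM_def, sub_eq_of_bellman_fixed hQ hQ', hR s₀ hs₀ a₀, sub_self, zero_add]
      _ ≤ γ * ∑ s', P s₀ a₀ s' * M := by
          rw [abs_mul, abs_of_nonneg hγ₀]
          exact mul_le_mul_of_nonneg_left ((abs_sum_le_sum_abs _ _).trans
            (sum_le_sum fun s' _ => hV s')) hγ₀
      _ ≤ γ * M := by
          rw [← sum_mul]
          exact mul_le_mul_of_nonneg_left
            (mul_le_of_le_one_left hM_nonneg (hP_sum s₀ a₀)) hγ₀
  have hM₀ : M = 0 := by nlinarith
  have := hmax (s, a) (mem_product.2 ⟨hs, mem_univ a⟩)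
  exact sub_eq_zero.1 (abs_nonpos_iff.1 (this.trans_eq hM₀))

theorem bellman_fixed_sub_eq_reward_sub (hγ₀ : 0 ≤ γ) (hγ₁ : γ < 1)
    (hP_nonneg : ∀ s a s', 0 ≤ P s a s') (hP_sum : ∀ s a, ∑ s', P s a s' ≤ 1)
    {S : Finset (Fin 5)} (hS : ∀ s a, ∀ s' ∉ S, P s a s' = 0)
    (hR : ∀ s ∈ S, ∀ a, R' s a = R s a)
    (hQ : bellman P R γ Q = Q) (hQ' : bellman P R' γ Q' = Q') (s : Fin 5) (a : Act) :
    Q' s a - Q s a = R' s a - R s a := by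
  have hagree := bellman_fixed_eq_on_closed hγ₀ hγ₁ hP_nonneg hP_sum
    (fun s _ a s' hs' => hS s a s' hs') hR hQ hQ'
  rw [sub_eq_of_bellman_fixed hQ hQ', add_eq_left]
  refine mul_eq_zero_of_right _ (sum_eq_zero fun s' _ => ?_)
  by_cases hs' : s' ∈ S
  · rw [stateValue, stateValue, funext (hagree s' hs'), sub_self, mul_zero]
  · rw [hS s a s' hs', zero_mul]

end FixedPoints

section Example

variable {p d ε C : ℝ}

theorem P5_nonneg (hp : p ∈ Set.Icc (0 : ℝ) 1) (s : Fin 5) (a : Act) (s' : Fin 5) :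
    0 ≤ P5 p s a s' := by
  obtain ⟨hp₀, hp₁⟩ := hp
  fin_cases s <;> cases a <;> fin_cases s' <;> simp [P5, hp₀, hp₁]

theorem sum_P5 (p : ℝ) (s : Fin 5) (a : Act) : ∑ s', P5 p s a s' = 1 := by
  fin_cases s <;> cases a <;> simp [P5, Fin.sum_univ_five]

theorem P5_apply_zero (p : ℝ) (s : Fin 5) (a : Act) : P5 p s a 0 = 0 := by
  fin_cases s <;> cases a <;> simp [P5]

theorem R5c_of_ne_zero {s : Fin 5} (hs : s ≠ 0) (a : Act) : R5c d ε C s a = R5 d s a := by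
  simp [R5c, hs]

theorem supNorm_R5c_sub_R5 :
    supNorm (fun s a => R5c d ε C s a - R5 d s a) = |ε * (d + C)| := by
  have h0L : R5c d ε C 0 Act.L - R5 d 0 Act.L = -(ε * (d + C)) := by simp [R5c, R5]; ring
  have h0R : R5c d ε C 0 Act.R - R5 d 0 Act.R = ε * (d + C) := by simp [R5c, R5]; ring
  rw [supNorm_eq_abs_of_forall_abs_le 0 Act.R, h0R]
  intro s a
  rw [h0R]
  by_cases hs : s = 0
  · subst hs
    cases a
    · rw [h0L, abs_neg]
    · rw [h0R]
  · rw [R5c_of_ne_zero hs, sub_self, abs_zero]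
    exact abs_nonneg _

end Example

/-- For the five-state example MDP under the Huber attack with attack signal
`C = ((2-ε)d + κ)/ε`, any fixed point `Q*` of the clean Bellman operator and
any fixed point `Q̃*_c` of the perturbed Bellman operator satisfy
`‖Q̃*_c - Q*‖∞ = 2d + κ`; since `κ > 0` is arbitrary, the gap can be made
arbitrarily large. -/
theorem example_mdp_corrupted_gap (γ p d ε κ : ℝ)
    (hγ : γ ∈ Set.Ioo (0 : ℝ) 1) (hp : p ∈ Set.Icc (0 : ℝ) 1) (hd : 0 < d)
    (hε : ε ∈ Set.Ioo (0 : ℝ) 1) (hκ : 0 < κ)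
    (Qstar Qc : Fin 5 → Act → ℝ)
    (hQ : bellman (P5 p) (R5 d) γ Qstar = Qstar)
    (hQc : bellman (P5 p) (R5c d ε (((2 - ε) * d + κ) / ε)) γ Qc = Qc) :
    supNorm (fun s a => Qc s a - Qstar s a) = 2 * d + κ := by
  have hgap := bellman_fixed_sub_eq_reward_sub hγ.1.le hγ.2 (P5_nonneg hp)
    (fun s a => (sum_P5 p s a).le) (S := {0}ᶜ)
    (fun s a s' hs' => by
      obtain rfl : s' = 0 := by simpa using hs'
      exact P5_apply_zero p s a)
    (fun s hs a => R5c_of_ne_zero (by simpa using hs) a) hQ hQc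
  rw [funext₂ hgap, supNorm_R5c_sub_R5, mul_add, mul_div_cancel₀ _ hε.1.ne',
    abs_of_pos (by linarith)]
  ring
end

section
/- For the five-state example MDP under the Huber attack with attack signal C = ((2−ε)d + κ)/ε, the optimal action at state 1 is flipped: any fixed point Q* of the clean Bellman operator satisfies Q*(1,L) > Q*(1,R), while any fixed point Q̃*_c of the perturbed Bellman operator satisfies Q̃*_c(1,R) > Q̃*_c(1,L). -/
open Finset

/-
In the paper's numbering of states, the two branches leaving state 1 are mirror images: states
2, 3 have equal rewards and the same self-loop probability, and so do the absorbing states 4, 5.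
Hence at any fixed point of the Bellman operator the values of 2 and 3 coincide, as do those of
4 and 5 (each pair solves the same equation `v = c + k v` with `k ∈ {γ, γp}` different from `1`),
so the continuation values of `L` and `R` at state 1 are equal and
`Q(1,L) - Q(1,R) = R(1,L) - R(1,R)`. This gap is `2d > 0` for the clean rewards and
`2(1-ε)d - 2εC = -2d - 2κ < 0` for the attacked ones.
-/

lemma Act.sup'_univ {α : Type*} [LinearOrder α] (f : Act → α) :
    univ.sup' univ_nonempty f = max (f .L) (f .R) := by
  apply le_antisymm
  · exact sup'_le _ _ fun a _ => by cases a <;> simp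
  · exact max_le (le_sup' f (mem_univ _)) (le_sup' f (mem_univ _))

def greedyValue (Q : Fin 5 → Act → ℝ) (s : Fin 5) : ℝ := max (Q s .L) (Q s .R)

lemma bellman_apply (P : Fin 5 → Act → Fin 5 → ℝ) (R : Fin 5 → Act → ℝ) (γ : ℝ)
    (Q : Fin 5 → Act → ℝ) (s : Fin 5) (a : Act) :
    bellman P R γ Q s a = R s a + γ * ∑ s', P s a s' * greedyValue Q s' := by
  simp only [bellman, Act.sup'_univ, greedyValue]

lemma greedyValue_of_isFixedPt {P : Fin 5 → Act → Fin 5 → ℝ} {R : Fin 5 → Act → ℝ} {γ : ℝ}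
    {Q : Fin 5 → Act → ℝ} (hQ : bellman P R γ Q = Q) {s : Fin 5} (hP : P s .L = P s .R) :
    greedyValue Q s = greedyValue R s + γ * ∑ s', P s .L s' * greedyValue Q s' := by
  have hQs (a : Act) : Q s a = bellman P R γ Q s a := (congrFun (congrFun hQ s) a).symm
  rw [greedyValue, hQs .L, hQs .R, bellman_apply, bellman_apply, hP, max_add_add_right,
    greedyValue]

section P5

variable (p : ℝ) (v : Fin 5 → ℝ)

lemma sum_P5_zero_L : ∑ s', P5 p 0 .L s' * v s' = p * v 1 + (1 - p) * v 4 := by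
  simp [P5, Fin.sum_univ_five]

lemma sum_P5_zero_R : ∑ s', P5 p 0 .R s' * v s' = p * v 2 + (1 - p) * v 3 := by
  simp [P5, Fin.sum_univ_five]

lemma sum_P5_one_L : ∑ s', P5 p 1 .L s' * v s' = p * v 1 + (1 - p) * v 4 := by
  simp [P5, Fin.sum_univ_five]

lemma sum_P5_two_L : ∑ s', P5 p 2 .L s' * v s' = p * v 2 + (1 - p) * v 3 := by
  simp [P5, Fin.sum_univ_five]

lemma sum_P5_three_L : ∑ s', P5 p 3 .L s' * v s' = v 3 := by
  simp [P5]

lemma sum_P5_four_L : ∑ s', P5 p 4 .L s' * v s' = v 4 := by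
  simp [P5]

lemma P5_L_eq_R {s : Fin 5} (hs : s ≠ 0) : P5 p s .L = P5 p s .R := by
  funext s'
  simp [P5, hs]

end P5

lemma eq_of_eq_add_mul_self {k c x y : ℝ} (hk : k ≠ 1) (hx : x = c + k * x)
    (hy : y = c + k * y) : x = y := by
  have h : (1 - k) * (x - y) = 0 := by linear_combination hx - hy
  simpa [sub_eq_zero, Ne.symm hk] using h

theorem P5_actionGap_of_isFixedPt {p γ : ℝ} {R Q : Fin 5 → Act → ℝ} (hγ : γ < 1)
    (hγp : γ * p < 1) (h12 : R 1 = R 2) (h34 : R 3 = R 4) (hQ : bellman (P5 p) R γ Q = Q) :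
    Q 0 .L - Q 0 .R = R 0 .L - R 0 .R := by
  have hV (s : Fin 5) (hs : s ≠ 0) := greedyValue_of_isFixedPt hQ (P5_L_eq_R p hs)
  have hV1 := hV 1 (by decide)
  have hV2 := hV 2 (by decide)
  have hV3 := hV 3 (by decide)
  have hV4 := hV 4 (by decide)
  rw [sum_P5_one_L] at hV1
  rw [sum_P5_two_L] at hV2
  rw [sum_P5_three_L] at hV3
  rw [sum_P5_four_L] at hV4
  have r12 : greedyValue R 1 = greedyValue R 2 := by simp only [greedyValue, h12]
  have r34 : greedyValue R 3 = greedyValue R 4 := by simp only [greedyValue, h34]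
  have v34 : greedyValue Q 3 = greedyValue Q 4 :=
    eq_of_eq_add_mul_self hγ.ne hV3 (by rw [r34]; exact hV4)
  have v12 : greedyValue Q 1 = greedyValue Q 2 :=
    eq_of_eq_add_mul_self (k := γ * p) (c := greedyValue R 1 + γ * (1 - p) * greedyValue Q 4)
      hγp.ne (by linear_combination hV1) (by linear_combination hV2 - r12 + γ * (1 - p) * v34)
  rw [← hQ, bellman_apply, bellman_apply, sum_P5_zero_L, sum_P5_zero_R, v12, v34]
  ring

/-- For the five-state example MDP under the Huber attack with attack signal
`C = ((2-ε)d + κ)/ε`, the optimal action at state 1 is flipped: any fixed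
point `Q*` of the clean Bellman operator satisfies `Q*(1,L) > Q*(1,R)`, while
any fixed point `Q̃*_c` of the perturbed operator satisfies
`Q̃*_c(1,R) > Q̃*_c(1,L)`. -/
theorem example_mdp_action_flip (γ p d ε κ : ℝ)
    (hγ : γ ∈ Set.Ioo (0 : ℝ) 1) (hp : p ∈ Set.Icc (0 : ℝ) 1) (hd : 0 < d)
    (hε : ε ∈ Set.Ioo (0 : ℝ) 1) (hκ : 0 < κ)
    (Qstar Qc : Fin 5 → Act → ℝ)
    (hQ : bellman (P5 p) (R5 d) γ Qstar = Qstar)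
    (hQc : bellman (P5 p) (R5c d ε (((2 - ε) * d + κ) / ε)) γ Qc = Qc) :
    Qstar 0 Act.L > Qstar 0 Act.R ∧ Qc 0 Act.R > Qc 0 Act.L := by
  have hγp : γ * p < 1 := mul_lt_one_of_nonneg_of_lt_one_left hγ.1.le hγ.2 hp.2
  have clean := P5_actionGap_of_isFixedPt hγ.2 hγp (by funext a; simp [R5])
    (by funext a; simp [R5]) hQ
  have attacked := P5_actionGap_of_isFixedPt hγ.2 hγp (by funext a; simp [R5c, R5])
    (by funext a; simp [R5c, R5]) hQc
  have hC : ε * (((2 - ε) * d + κ) / ε) = (2 - ε) * d + κ := mul_div_cancel₀ _ hε.1.ne'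
  simp only [R5, R5c, if_true] at clean attacked
  constructor <;> linarith
end

section
/- (Recursion lemma) Let α ∈ (0,1), γ ∈ (0,1), W ≥ 0, and let (d_t)_{t≥0} be a sequence of nonnegative reals satisfying, for every t ≥ 0, d_{t+1} ≤ (1−α)^{t+1} d_0 + γ·α·Σ_{k=0}^{t} (1−α)^{t−k} d_k + W. Then for every t ≥ 0, d_t ≤ (1 − α(1−γ))^{t} d_0 + W/(1−γ). -/
/-!
Write `β = 1 - α(1-γ)` and `W' = W/(1-γ)`. The sequence `b t = β^t d₀ + W'` is a
supersolution of the recursion: by the two-variable geometric sum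
`γα Σₖ (1-α)^{t-k} βᵏ = β^{t+1} - (1-α)^{t+1}` (as `β - (1-α) = γα`), and the `W'`-part
contributes `W + γW'(1 - (1-α)^{t+1}) ≤ W + γW' = W'`. Since the recursion has
nonnegative weights, strong induction compares `d` with `b`.
-/

open Finset

theorem sum_range_pow_mul_pow_mul_sub {R : Type*} [CommRing R] (x y : R) (n : ℕ) :
    (∑ k ∈ range (n + 1), x ^ (n - k) * y ^ k) * (y - x) = y ^ (n + 1) - x ^ (n + 1) := by
  rw [← geom_sum₂_mul y x (n + 1), Nat.add_sub_cancel]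
  exact congrArg (· * (y - x)) (sum_congr rfl fun k _ => mul_comm _ _)

theorem le_of_succ_le_sum_of_sum_le_succ {d b a : ℕ → ℝ} {c : ℕ → ℕ → ℝ}
    (hc : ∀ t k, 0 ≤ c t k) (h₀ : d 0 ≤ b 0)
    (hd : ∀ t, d (t + 1) ≤ a t + ∑ k ∈ range (t + 1), c t k * d k)
    (hb : ∀ t, a t + ∑ k ∈ range (t + 1), c t k * b k ≤ b (t + 1)) :
    ∀ t, d t ≤ b t := by
  intro t
  induction t using Nat.strong_induction_on with
  | _ t ih =>
    cases t with
    | zero => exact h₀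
    | succ t =>
      calc d (t + 1) ≤ a t + ∑ k ∈ range (t + 1), c t k * d k := hd t
        _ ≤ a t + ∑ k ∈ range (t + 1), c t k * b k := by
          gcongr with k hk
          · exact hc t k
          · exact ih k (mem_range.mp hk)
        _ ≤ b (t + 1) := hb t

theorem recursion_step_le_geometric_bound {α γ W : ℝ} (D : ℝ) (hα : α ≤ 1) (hγ₀ : 0 ≤ γ)
    (hγ₁ : γ < 1) (hW : 0 ≤ W) (t : ℕ) :
    (1 - α) ^ (t + 1) * D + W + ∑ k ∈ range (t + 1),
        γ * α * (1 - α) ^ (t - k) * ((1 - α * (1 - γ)) ^ k * D + W / (1 - γ)) ≤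
      (1 - α * (1 - γ)) ^ (t + 1) * D + W / (1 - γ) := by
  set β := 1 - α * (1 - γ)
  set W' := W / (1 - γ)
  have hγ' : 0 < 1 - γ := sub_pos.mpr hγ₁
  have hW' : 0 ≤ W' := div_nonneg hW hγ'.le
  have hW'_eq : W + γ * W' = W' := by
    simp only [W']
    field_simp
    ring
  have hβ := sum_range_pow_mul_pow_mul_sub (1 - α) β t
  have hone := sum_range_pow_mul_pow_mul_sub (1 - α) 1 t
  simp only [one_pow, mul_one] at hone
  have hpow : 0 ≤ (1 - α) ^ (t + 1) := pow_nonneg (by linarith) _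
  have hsplit : ∑ k ∈ range (t + 1), γ * α * (1 - α) ^ (t - k) * (β ^ k * D + W')
      = γ * α * D * ∑ k ∈ range (t + 1), (1 - α) ^ (t - k) * β ^ k
        + γ * α * W' * ∑ k ∈ range (t + 1), (1 - α) ^ (t - k) := by
    rw [mul_sum, mul_sum, ← sum_add_distrib]
    exact sum_congr rfl fun _ _ => by ring
  rw [hsplit]
  linear_combination mul_nonneg (mul_nonneg hγ₀ hW') hpow + D * hβ + γ * W' * hone + hW'_eq

theorem recursion_lemma_general (α γ W : ℝ) (hα : α ∈ Set.Ioo (0 : ℝ) 1)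
    (hγ : γ ∈ Set.Ioo (0 : ℝ) 1) (hW : 0 ≤ W)
    (d : ℕ → ℝ)
    (hrec : ∀ t, d (t + 1) ≤
      (1 - α) ^ (t + 1) * d 0 + γ * α * ∑ k ∈ Finset.range (t + 1), (1 - α) ^ (t - k) * d k + W) :
    ∀ t, d t ≤ (1 - α * (1 - γ)) ^ t * d 0 + W / (1 - γ) := by
  obtain ⟨hα₀, hα₁⟩ := hα
  obtain ⟨hγ₀, hγ₁⟩ := hγ
  have h₀ : d 0 ≤ (1 - α * (1 - γ)) ^ 0 * d 0 + W / (1 - γ) := by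
    simpa using div_nonneg hW (sub_pos.mpr hγ₁).le
  refine le_of_succ_le_sum_of_sum_le_succ (a := fun t => (1 - α) ^ (t + 1) * d 0 + W)
    (c := fun t k => γ * α * (1 - α) ^ (t - k)) (fun t k => by positivity) h₀
    (fun t => by simpa [mul_sum, mul_assoc, add_right_comm] using hrec t)
    (recursion_step_le_geometric_bound (d 0) hα₁.le hγ₀.le hγ₁ hW)

/-- (Recursion lemma)  If a nonnegative sequence satisfies
`d_{t+1} ≤ (1-α)^{t+1} d_0 + γ·α·Σ_{k=0}^{t} (1-α)^{t-k} d_k + W`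
for every `t ≥ 0`, then `d_t ≤ (1 - α(1-γ))^t d_0 + W/(1-γ)` for every `t`. -/
theorem recursion_lemma (α γ W : ℝ) (hα : α ∈ Set.Ioo (0 : ℝ) 1)
    (hγ : γ ∈ Set.Ioo (0 : ℝ) 1) (hW : 0 ≤ W)
    (d : ℕ → ℝ) (hd : ∀ t, 0 ≤ d t)
    (hrec : ∀ t, d (t + 1) ≤
      (1 - α) ^ (t + 1) * d 0 + γ * α * ∑ k ∈ Finset.range (t + 1), (1 - α) ^ (t - k) * d k + W) :
    ∀ t, d t ≤ (1 - α * (1 - γ)) ^ t * d 0 + W / (1 - γ) :=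
  recursion_lemma_general α γ W hα hγ hW d hrec
end
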